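/- For any directed edge e of a planar graph, the sum of the signed weights over all non-backtracking walks from e to -e equals zero: ∑_{W ∈ W(e,-e)} w(W) = 0. (Assume edge weights small enough that the series converges absolutely, e.g. ‖x‖_∞ < 1/(Δ-1) where Δ is the maximum degree.) -/

import Mathlib

open Complex

noncomputable section

attribute [local instance] Classical.propDecidable

/-- Reversal of a directed edge `(z, w) ↦ (w, z)`. -/
def rev (e : ℂ × ℂ) : ℂ × ℂ := (e.2, e.1)

/-- The undirected edge underlying a directed edge. -/
def ue (e : ℂ × ℂ) : Sym2 ℂ := s(e.1, e.2)

/-- The turning angle `∠(e, g) = Arg((h(g) - t(g)) / (h(e) - t(e))) ∈ (-π, π]`. -/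
def ang (e g : ℂ × ℂ) : ℝ := Complex.arg ((g.2 - g.1) / (e.2 - e.1))

/-- The list of consecutive steps of a walk, recorded as a list of pairs of directed edges. -/
def steps (l : List (ℂ × ℂ)) : List ((ℂ × ℂ) × (ℂ × ℂ)) := l.zip l.tail

/-- The total turning angle `α(W)` of a walk. -/
def totalAngle (l : List (ℂ × ℂ)) : ℝ := ((steps l).map fun p => ang p.1 p.2).sum

/-- The signed weight `w(W) = exp(i α(W)/2) ∏_{i<n} x_{e_i}` of a walk
(the last edge is not counted in the product of edge weights). -/
def wt (x : Sym2 ℂ → ℝ) (l : List (ℂ × ℂ)) : ℂ :=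
  Complex.exp (Complex.I * (totalAngle l : ℂ) / 2) *
    ((l.dropLast).map fun e => (x (ue e) : ℂ)).prod

/-- A non-backtracking walk in the directed edge set `D`: a nonempty sequence of directed
edges of `D` such that consecutive edges are head-to-tail and never exact reversals. -/
def IsWalk (D : Set (ℂ × ℂ)) (l : List (ℂ × ℂ)) : Prop :=
  l ≠ [] ∧ (∀ e ∈ l, e ∈ D) ∧ List.Chain' (fun a b => a.2 = b.1 ∧ b ≠ rev a) l

/-- A non-backtracking walk from the directed edge `e` to the directed edge `g`. -/
def WalkFrom (D : Set (ℂ × ℂ)) (e g : ℂ × ℂ) (l : List (ℂ × ℂ)) : Prop :=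
  IsWalk D l ∧ l.head? = some e ∧ l.getLast? = some g

/-- The reversed walk `-W`. -/
def revWalk (l : List (ℂ × ℂ)) : List (ℂ × ℂ) := (l.map rev).reverse

/-- The Kac-Ward transition coefficient
`Λ_{e,g} = x_e exp(i ∠(e,g)/2)` if `h(e) = t(g)` and `g ≠ -e`, and `0` otherwise. -/
def KWtrans (D : Set (ℂ × ℂ)) (x : Sym2 ℂ → ℝ) (e g : ℂ × ℂ) : ℂ :=
  if e ∈ D ∧ g ∈ D ∧ e.2 = g.1 ∧ g ≠ rev e then
    (x (ue e) : ℂ) * Complex.exp (Complex.I * (ang e g : ℂ) / 2)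
  else 0

/-- Number of times a walk goes through a given undirected edge
(the final edge of a walk is not counted as "gone through"). -/
def throughCount (l : List (ℂ × ℂ)) (t : Sym2 ℂ) : ℕ :=
  ((l.dropLast).filter fun a => ue a = t).length

/-- A graph embedded in the plane, presented by its (symmetric) set of directed edges.
Edges are nondegenerate segments, and, since two edges of a graph overlap in at most one
point, an edge is never continued by an edge turning by exactly the angle `π`
(i.e. the direction ratio of consecutive distinct edges is never a nonpositive real). -/
structure PlaneGraph where
  D : Set (ℂ × ℂ)
  nd : ∀ e ∈ D, e.1 ≠ e.2
  symm : ∀ e ∈ D, rev e ∈ D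
  noHalfTurn : ∀ e ∈ D, ∀ g ∈ D, e.2 = g.1 → g ≠ rev e →
    ¬(((g.2 - g.1) / (e.2 - e.1)).im = 0 ∧ ((g.2 - g.1) / (e.2 - e.1)).re < 0)

/-!
Reversal `W ↦ -W` is an involution of the set of non-backtracking walks from `e` to `-e`
that flips the sign of the weight. The edge weights are the same because the first and the last
edge of such a walk carry the same weight `x_e`. The turning angles of `-W` are those of `W`
with opposite signs (no turn is by exactly `π`), so `α(-W) = -α(W)`. Since the angles telescope,
`exp (i α(W))` is the ratio of the directions of the last and the first edge, which is `-1`; hence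
`exp (i α(-W)/2) = exp (i α(W)/2) exp (-i α(W)) = -exp (i α(W)/2)`.
-/

def dir (e : ℂ × ℂ) : ℂ := e.2 - e.1

@[simp] lemma rev_rev (e : ℂ × ℂ) : rev (rev e) = e := rfl

@[simp] lemma ue_rev (e : ℂ × ℂ) : ue (rev e) = ue e := Sym2.eq_swap

lemma dir_rev (e : ℂ × ℂ) : dir (rev e) = -dir e := (neg_sub _ _).symm

lemma revWalk_involutive : Function.Involutive revWalk := fun l => by
  simp [revWalk, Function.comp_def]

section Steps

lemma steps_cons_cons (a b : ℂ × ℂ) (l : List (ℂ × ℂ)) :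
    steps (a :: b :: l) = (a, b) :: steps (b :: l) := rfl

lemma steps_append_singleton {l : List (ℂ × ℂ)} (hl : l ≠ []) (g : ℂ × ℂ) :
    steps (l ++ [g]) = steps l ++ [(l.getLast hl, g)] := by
  induction l with
  | nil => contradiction
  | cons a l ih =>
    cases l with
    | nil => rfl
    | cons b l =>
      rw [List.cons_append, List.cons_append, steps_cons_cons, ← List.cons_append,
        ih (List.cons_ne_nil _ _)]
      simp [steps_cons_cons, List.getLast_cons]

lemma steps_revWalk (l : List (ℂ × ℂ)) :
    steps (revWalk l) = ((steps l).map fun p => (rev p.2, rev p.1)).reverse := by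
  induction l with
  | nil => rfl
  | cons a l ih =>
    cases l with
    | nil => rfl
    | cons b l =>
      have hne : revWalk (b :: l) ≠ [] := by simp [revWalk]
      have hlast : (revWalk (b :: l)).getLast hne = rev b := by simp [revWalk]
      have hcons : revWalk (a :: b :: l) = revWalk (b :: l) ++ [rev a] := by simp [revWalk]
      rw [hcons, steps_append_singleton hne, hlast, ih, steps_cons_cons]
      simp

lemma mem_of_mem_steps {l : List (ℂ × ℂ)} {p : (ℂ × ℂ) × (ℂ × ℂ)} (hp : p ∈ steps l) :
    p.1 ∈ l ∧ p.2 ∈ l :=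
  ⟨(List.of_mem_zip hp).1, List.tail_subset l (List.of_mem_zip hp).2⟩

lemma List.IsChain.rel_of_mem_steps {R : ℂ × ℂ → ℂ × ℂ → Prop} {l : List (ℂ × ℂ)}
    (h : l.IsChain R) {p : (ℂ × ℂ) × (ℂ × ℂ)} (hp : p ∈ steps l) : R p.1 p.2 := by
  induction l with
  | nil => simp [steps] at hp
  | cons a l ih =>
    cases l with
    | nil => simp [steps] at hp
    | cons b l =>
      rcases List.mem_cons.1 hp with rfl | hp
      · exact (List.isChain_cons_cons.1 h).1
      · exact ih (List.isChain_cons_cons.1 h).2 hp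

end Steps

section Angles

lemma totalAngle_cons_cons (a b : ℂ × ℂ) (l : List (ℂ × ℂ)) :
    totalAngle (a :: b :: l) = ang a b + totalAngle (b :: l) := by
  simp [totalAngle, steps_cons_cons]

lemma norm_mul_exp_totalAngle_mul_I (a : ℂ × ℂ) (l : List (ℂ × ℂ))
    (h : ∀ p ∈ a :: l, dir p ≠ 0) :
    (‖dir ((a :: l).getLast (List.cons_ne_nil a l)) / dir a‖ : ℂ) *
        exp (totalAngle (a :: l) * I) =
      dir ((a :: l).getLast (List.cons_ne_nil a l)) / dir a := by
  induction l generalizing a with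
  | nil => simp [totalAngle, steps, div_self (h a List.mem_cons_self)]
  | cons b l ih =>
    set L := (b :: l).getLast (List.cons_ne_nil b l)
    have hL : (a :: b :: l).getLast (List.cons_ne_nil a _) = L := List.getLast_cons _
    have hsplit : dir L / dir a = dir b / dir a * (dir L / dir b) := by
      field_simp [h a List.mem_cons_self, h b (List.mem_cons_of_mem a List.mem_cons_self)]
    have hturn : (‖dir b / dir a‖ : ℂ) * exp (ang a b * I) = dir b / dir a :=
      norm_mul_exp_arg_mul_I _
    rw [hL, hsplit, totalAngle_cons_cons, norm_mul, ofReal_mul, ofReal_add, add_mul, exp_add]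
    calc _ = (‖dir b / dir a‖ * exp (ang a b * I)) *
          (‖dir L / dir b‖ * exp (totalAngle (b :: l) * I)) := by ring
      _ = _ := by rw [hturn, ih b fun p hp => h p (List.mem_cons_of_mem a hp)]

lemma exp_I_mul_totalAngle_eq_neg_one {l : List (ℂ × ℂ)} {e : ℂ × ℂ} (he : l.head? = some e)
    (hlast : l.getLast? = some (rev e)) (h : ∀ p ∈ l, dir p ≠ 0) :
    exp (I * totalAngle l) = -1 := by
  obtain ⟨t, rfl⟩ : ∃ t, l = e :: t := by
    cases l <;> simp_all
  have hL : (e :: t).getLast (List.cons_ne_nil e t) = rev e :=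
    Option.some_injective _ ((List.getLast?_eq_some_getLast _).symm.trans hlast)
  have key := norm_mul_exp_totalAngle_mul_I e t h
  rw [hL, dir_rev, neg_div, div_self (h e List.mem_cons_self)] at key
  simpa [mul_comm I] using key

lemma ang_rev_rev {a b : ℂ × ℂ} (h : ¬((dir b / dir a).im = 0 ∧ (dir b / dir a).re < 0)) :
    ang (rev b) (rev a) = -ang a b := by
  have hinv : dir (rev a) / dir (rev b) = (dir b / dir a)⁻¹ := by
    rw [dir_rev, dir_rev, neg_div_neg_eq, inv_div]
  show arg (dir (rev a) / dir (rev b)) = -arg (dir b / dir a)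
  rw [hinv, arg_inv, if_neg fun hpi => h (arg_eq_pi_iff.1 hpi).symm]

lemma totalAngle_revWalk {l : List (ℂ × ℂ)}
    (h : ∀ p ∈ steps l, ang (rev p.2) (rev p.1) = -ang p.1 p.2) :
    totalAngle (revWalk l) = -totalAngle l := by
  simp only [totalAngle, steps_revWalk, List.map_reverse, List.sum_reverse, List.map_map,
    Function.comp_def]
  rw [List.map_congr_left h, List.sum_neg, List.map_map]
  rfl

end Angles

lemma List.prod_map_dropLast_eq_prod_map_tail {α M : Type*} [CommMonoid M] (f : α → M)
    {l : List α} {a b : α} (ha : l.head? = some a) (hb : l.getLast? = some b) (hab : f a = f b) :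
    (l.dropLast.map f).prod = (l.tail.map f).prod := by
  obtain ⟨t, rfl⟩ : ∃ t, l = a :: t := by
    cases l <;> simp_all
  rcases List.eq_nil_or_concat' t with rfl | ⟨m, c, rfl⟩
  · rfl
  · rw [← List.cons_append, List.getLast?_concat] at hb
    obtain rfl : c = b := Option.some_injective _ hb
    rw [List.tail_cons, ← List.cons_append, List.dropLast_concat]
    simp [hab, mul_comm]

namespace PlaneGraph

variable (Γ : PlaneGraph)

lemma walkFrom_revWalk {e g : ℂ × ℂ} {l : List (ℂ × ℂ)} (hl : WalkFrom Γ.D e g l) :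
    WalkFrom Γ.D (rev g) (rev e) (revWalk l) := by
  obtain ⟨⟨hne, hmem, hchain⟩, hhead, hlast⟩ := hl
  refine ⟨⟨by simpa [revWalk] using hne, ?_, ?_⟩, ?_, ?_⟩
  · simp only [revWalk, List.mem_reverse, List.mem_map]
    rintro _ ⟨p, hp, rfl⟩
    exact Γ.symm p (hmem p hp)
  · rw [List.Chain', revWalk, List.isChain_reverse, List.isChain_map]
    exact hchain.imp fun a b hab => ⟨hab.1.symm, fun hba => hab.2 hba.symm⟩
  · rw [revWalk, List.head?_reverse, List.getLast?_map, hlast]; rfl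
  · rw [revWalk, List.getLast?_reverse, List.head?_map, hhead]; rfl

lemma walkFrom_rev_revWalk_iff {e : ℂ × ℂ} {l : List (ℂ × ℂ)} :
    WalkFrom Γ.D e (rev e) (revWalk l) ↔ WalkFrom Γ.D e (rev e) l :=
  ⟨fun h => revWalk_involutive l ▸ Γ.walkFrom_revWalk h, Γ.walkFrom_revWalk⟩

lemma totalAngle_revWalk_of_isWalk {l : List (ℂ × ℂ)} (hl : IsWalk Γ.D l) :
    totalAngle (revWalk l) = -totalAngle l := by
  obtain ⟨-, hmem, hchain⟩ := hl
  refine totalAngle_revWalk fun p hp => ang_rev_rev ?_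
  obtain ⟨hhead, hnot_rev⟩ := hchain.rel_of_mem_steps hp
  exact Γ.noHalfTurn p.1 (hmem _ (mem_of_mem_steps hp).1) p.2 (hmem _ (mem_of_mem_steps hp).2)
    hhead hnot_rev

lemma wt_revWalk (x : Sym2 ℂ → ℝ) {e : ℂ × ℂ} {l : List (ℂ × ℂ)}
    (hl : WalkFrom Γ.D e (rev e) l) : wt x (revWalk l) = -wt x l := by
  have hexp : exp (I * totalAngle l) = -1 :=
    exp_I_mul_totalAngle_eq_neg_one hl.2.1 hl.2.2
      fun p hp => sub_ne_zero.2 (Γ.nd p (hl.1.2.1 p hp)).symm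
  have hhalf : exp (I * totalAngle (revWalk l) / 2) = -exp (I * totalAngle l / 2) :=
    calc exp (I * totalAngle (revWalk l) / 2)
        = exp (I * totalAngle l / 2) * (exp (I * totalAngle l))⁻¹ := by
          rw [Γ.totalAngle_revWalk_of_isWalk hl.1, ← exp_neg, ← exp_add]
          push_cast
          ring_nf
      _ = -exp (I * totalAngle l / 2) := by rw [hexp]; ring
  have hprod : ((revWalk l).dropLast.map fun e => (x (ue e) : ℂ)).prod =
      (l.dropLast.map fun e => (x (ue e) : ℂ)).prod := by
    rw [List.prod_map_dropLast_eq_prod_map_tail _ hl.2.1 hl.2.2 (by simp)]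
    simp [revWalk, List.dropLast_reverse, List.map_tail, Function.comp_def]
  rw [wt, wt, hhalf, hprod, neg_mul]

end PlaneGraph

theorem sum_weights_to_reversed_edge_eq_zero_general
    (Γ : PlaneGraph) (x : Sym2 ℂ → ℝ)
    (e : ℂ × ℂ) :
    ∑' l : {l : List (ℂ × ℂ) // WalkFrom Γ.D e (rev e) l}, wt x l.1 = 0 := by
  let σ : {l // WalkFrom Γ.D e (rev e) l} ≃ {l // WalkFrom Γ.D e (rev e) l} :=
    (revWalk_involutive.toPerm _).subtypeEquiv fun _ => Γ.walkFrom_rev_revWalk_iff.symm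
  have hσ : ∀ l, wt x (σ l).1 = -wt x l.1 := fun l => Γ.wt_revWalk x l.2
  have h := σ.tsum_eq fun l => wt x l.1
  simp only [hσ, tsum_neg] at h
  exact neg_eq_self.1 h

/-- the sum of signed weights over all non-backtracking walks from `e`
to `-e` vanishes (assuming absolute convergence of the series, which holds e.g.
when `‖x‖_∞ < 1/(Δ-1)`). -/
theorem sum_weights_to_reversed_edge_eq_zero
    (Γ : PlaneGraph) (x : Sym2 ℂ → ℝ) (hx : ∀ t : Sym2 ℂ, 0 < x t)
    (e : ℂ × ℂ)
    (hsum : Summable fun l : {l : List (ℂ × ℂ) // WalkFrom Γ.D e (rev e) l} => ‖wt x l.1‖) :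
    ∑' l : {l : List (ℂ × ℂ) // WalkFrom Γ.D e (rev e) l}, wt x l.1 = 0 :=
  sum_weights_to_reversed_edge_eq_zero_general Γ x e
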